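/- arXiv:2007.15504 — 7 statements merged into one kernel-verified Lean document; each statement's English description precedes it below -/
import Mathlib

section
/- For every finite tree T (a connected acyclic simple graph), the 2-packing number equals the domination number: ρ₂(T) = γ(T). -/
/-!
Root the tree at `r` and build a dominating set `S` and a 2-packing `P` greedily: while some
vertex is undominated, take an undominated vertex `u` of maximal depth, put `u` into `P` and
its parent into `S` (or `u` itself into `S` if `u = r`). Every earlier vertex of `P` lies at
least as deep as `u` and has its parent in `S`, which does not dominate `u`; in a tree this
forces their closed neighbourhoods to be disjoint from that of `u`. Hence
`γ ≤ |S| = |P| ≤ ρ₂`. Conversely, in any graph, distinct vertices of a 2-packing need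
distinct dominators, so `ρ₂ ≤ γ`.
-/

open SimpleGraph

/-- The domination number of a simple graph: minimum size of a set `S` such that the
closed neighborhoods of vertices of `S` cover all vertices. -/
noncomputable def gDomNum (V : Type*) [Fintype V] (G : SimpleGraph V) : ℕ :=
  sInf {n | ∃ S : Set V, (∀ u, ∃ v ∈ S, u ∈ insert v (G.neighborSet v)) ∧ S.ncard = n}

/-- The 2-packing number of a simple graph: maximum size of a set of vertices whose
closed neighborhoods are pairwise disjoint. -/
noncomputable def gTwoPackNum (V : Type*) [Fintype V] (G : SimpleGraph V) : ℕ :=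
  sSup {n | ∃ P : Set V,
    (P.Pairwise fun x y => Disjoint (insert x (G.neighborSet x)) (insert y (G.neighborSet y)))
    ∧ P.ncard = n}

namespace SimpleGraph

variable {V : Type*} {G : SimpleGraph V}

def closedNeighborSet (G : SimpleGraph V) (v : V) : Set V := insert v (G.neighborSet v)

lemma mem_closedNeighborSet {v w : V} : w ∈ G.closedNeighborSet v ↔ w = v ∨ G.Adj v w :=
  Iff.rfl

lemma self_mem_closedNeighborSet (v : V) : v ∈ G.closedNeighborSet v := Or.inl rfl

lemma mem_closedNeighborSet_comm {v w : V} :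
    w ∈ G.closedNeighborSet v ↔ v ∈ G.closedNeighborSet w := by
  simp only [mem_closedNeighborSet, eq_comm, G.adj_comm]

def IsDominatingSet (G : SimpleGraph V) (S : Set V) : Prop :=
  ∀ u, ∃ v ∈ S, u ∈ G.closedNeighborSet v

def IsTwoPacking (G : SimpleGraph V) (P : Set V) : Prop :=
  P.Pairwise fun x y => Disjoint (G.closedNeighborSet x) (G.closedNeighborSet y)

def undominatedSet (G : SimpleGraph V) (S : Set V) : Set V :=
  {u | ∀ v ∈ S, u ∉ G.closedNeighborSet v}

lemma undominatedSet_insert (S : Set V) (w : V) :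
    G.undominatedSet (insert w S) = G.undominatedSet S \ G.closedNeighborSet w := by
  ext u
  simp only [undominatedSet, Set.mem_insert_iff, forall_eq_or_imp, Set.mem_sdiff,
    Set.mem_ofPred_eq, and_comm]

lemma isDominatingSet_iff_undominatedSet_eq_empty {S : Set V} :
    G.IsDominatingSet S ↔ G.undominatedSet S = ∅ := by
  simp [IsDominatingSet, undominatedSet, Set.eq_empty_iff_forall_notMem]

lemma IsDominatingSet.insert_of_undominatedSet_subset {S : Set V} {u : V}
    (h : G.undominatedSet S ⊆ {u}) : G.IsDominatingSet (insert u S) := by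
  intro v
  by_cases hv : v ∈ G.undominatedSet S
  · exact ⟨u, Set.mem_insert u S, h hv ▸ self_mem_closedNeighborSet v⟩
  · simp only [undominatedSet, Set.mem_ofPred_eq, not_forall, not_not] at hv
    obtain ⟨s, hs, hvs⟩ := hv
    exact ⟨s, Set.mem_insert_of_mem u hs, hvs⟩

lemma IsTwoPacking.insert {P : Set V} {u : V} (hP : G.IsTwoPacking P)
    (hu : ∀ p ∈ P, Disjoint (G.closedNeighborSet u) (G.closedNeighborSet p)) :
    G.IsTwoPacking (insert u P) :=
  Set.pairwise_insert.mpr ⟨hP, fun p hp _ => ⟨hu p hp, (hu p hp).symm⟩⟩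

lemma IsTwoPacking.ncard_le [Finite V] {P S : Set V} (hP : G.IsTwoPacking P)
    (hS : G.IsDominatingSet S) : P.ncard ≤ S.ncard := by
  choose f hfS hf using hS
  refine Set.ncard_le_ncard_of_injOn f (fun x _ => hfS x) ?_ S.toFinite
  intro x hx y hy hxy
  by_contra hne
  exact Set.disjoint_left.mp (hP hx hy hne) (mem_closedNeighborSet_comm.mp (hf x))
    (hxy ▸ mem_closedNeighborSet_comm.mp (hf y))

lemma Connected.exists_adj_dist_add_one_eq (hG : G.Connected) {r v : V} (hv : v ≠ r) :
    ∃ w, G.Adj w v ∧ G.dist r w + 1 = G.dist r v := by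
  obtain ⟨p, -, hp⟩ := hG.exists_path_of_dist v r
  cases p with
  | nil => exact absurd rfl hv
  | @cons _ w _ hvw q =>
    refine ⟨w, hvw.symm, ?_⟩
    have hwr : G.dist r w ≤ q.length := dist_comm (G := G) ▸ dist_le q
    have hvr : G.dist r v ≤ G.dist r w + 1 :=
      (dist_eq_one_iff_adj.mpr hvw.symm) ▸ hG.dist_triangle
    rw [Walk.length_cons, dist_comm] at hp
    omega

lemma IsAcyclic.eq_of_adj_of_dist_add_one_eq (hG : G.IsAcyclic) {r a b w : V}
    (ha : G.Adj a w) (hb : G.Adj b w)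
    (hda : G.dist r a + 1 = G.dist r w) (hdb : G.dist r b + 1 = G.dist r w) : a = b := by
  classical
  have hrw : G.Reachable r w := Reachable.of_dist_ne_zero (by omega)
  obtain ⟨q, hq, -⟩ := hrw.exists_path_of_dist
  have mem_q : ∀ c, G.Adj c w → G.dist r c + 1 = G.dist r w → c ∈ q.support := by
    intro c hc hdc
    by_contra hcq
    obtain ⟨p, hp, hpl⟩ := (hrw.trans hc.symm.reachable).exists_path_of_dist
    have hwp := hG.mem_support_of_ne_mem_support_of_adj_of_isPath hp hq hc hcq
    have := (dist_le (p.takeUntil w hwp)).trans (p.length_takeUntil_le_length hwp)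
    omega
  rw [hG.eq_penultimate_of_adj_end hq ha.symm (mem_q a ha hda),
    hG.eq_penultimate_of_adj_end hq hb.symm (mem_q b hb hdb)]

/-- In the tree rooted at `r`, `s` is the parent of `p`. -/
lemma IsTree.disjoint_closedNeighborSet_of_parent (hG : G.IsTree) {r u p s : V}
    (hu : u ∉ G.closedNeighborSet s) (hsp : G.Adj s p) (hs : G.dist r s + 1 = G.dist r p)
    (hup : G.dist r u ≤ G.dist r p) :
    Disjoint (G.closedNeighborSet u) (G.closedNeighborSet p) := by
  have step {a b : V} (h : G.Adj a b) := hG.dist_eq_dist_add_one_of_adj r h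
  have parent_eq {a b w : V} (ha : G.Adj a w) (hb : G.Adj b w) :=
    hG.isAcyclic.eq_of_adj_of_dist_add_one_eq (r := r) ha hb
  have hup_ne : u ≠ p := fun h => hu (Or.inr (h ▸ hsp))
  have not_adj : ¬ G.Adj u p := fun h => by
    rcases step h with h' | h'
    · omega
    · exact hu (parent_eq h hsp h'.symm hs ▸ self_mem_closedNeighborSet u)
  refine Set.disjoint_left.mpr fun z hzu hzp => ?_
  rcases hzu with rfl | hzu <;> rcases hzp with rfl | hzp
  · exact hup_ne rfl
  · exact not_adj hzp.symm
  · exact not_adj hzu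
  · rcases step hzp with h | h
    · exact hu (Or.inr (parent_eq hzp.symm hsp h.symm hs ▸ hzu.symm))
    · rcases step hzu with h' | h'
      · omega
      · exact hup_ne (parent_eq hzu hzp h'.symm h.symm)

lemma IsTree.exists_isDominatingSet_isTwoPacking_of_greedy [Finite V] (hG : G.IsTree) (r : V)
    (S P : Set V) (hP : G.IsTwoPacking P) (hcard : P.ncard = S.ncard)
    (hparent : ∀ p ∈ P, ∃ s ∈ S, G.Adj s p ∧ G.dist r s + 1 = G.dist r p)
    (hdeep : ∀ p ∈ P, ∀ v ∈ G.undominatedSet S, G.dist r v ≤ G.dist r p) :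
    ∃ S' P' : Set V, G.IsDominatingSet S' ∧ G.IsTwoPacking P' ∧ P'.ncard = S'.ncard := by
  induction hn : (G.undominatedSet S).ncard using Nat.strong_induction_on generalizing S P with
  | _ n ih =>
  obtain hU | hU := (G.undominatedSet S).eq_empty_or_nonempty
  · exact ⟨S, P, isDominatingSet_iff_undominatedSet_eq_empty.mpr hU, hP, hcard⟩
  obtain ⟨u, hu, hmax⟩ := Set.exists_max_image _ (G.dist r) (Set.toFinite _) hU
  have hdisj : ∀ p ∈ P, Disjoint (G.closedNeighborSet u) (G.closedNeighborSet p) := by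
    intro p hp
    obtain ⟨s, hs, hsp, hds⟩ := hparent p hp
    exact hG.disjoint_closedNeighborSet_of_parent (hu s hs) hsp hds (hdeep p hp u hu)
  have huP : u ∉ P := fun h => Set.disjoint_left.mp (hdisj u h)
    (self_mem_closedNeighborSet u) (self_mem_closedNeighborSet u)
  by_cases hur : u = r
  · subst hur
    have huS : u ∉ S := fun h => hu u h (self_mem_closedNeighborSet u)
    have hU : G.undominatedSet S ⊆ {u} := fun v hv =>
      (hG.connected.dist_eq_zero_iff.mp (by simpa using hmax v hv)).symm
    refine ⟨insert u S, insert u P, .insert_of_undominatedSet_subset hU, hP.insert hdisj, ?_⟩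
    rw [Set.ncard_insert_of_notMem huP, Set.ncard_insert_of_notMem huS, hcard]
  obtain ⟨w, hwu, hdw⟩ := hG.connected.exists_adj_dist_add_one_eq hur
  have hwS : w ∉ S := fun h => hu w h (Or.inr hwu)
  have hU' : G.undominatedSet (insert w S) ⊆ G.undominatedSet S :=
    (undominatedSet_insert S w).symm ▸ Set.sdiff_subset
  refine ih _ ?_ (insert w S) (insert u P) (hP.insert hdisj) ?_ ?_ ?_ rfl
  · refine hn ▸ Set.ncard_lt_ncard ((Set.ssubset_iff_of_subset hU').mpr ⟨u, hu, ?_⟩)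
    exact fun h => h w (Set.mem_insert w S) (Or.inr hwu)
  · rw [Set.ncard_insert_of_notMem huP, Set.ncard_insert_of_notMem hwS, hcard]
  · rintro p (rfl | hp)
    · exact ⟨w, Set.mem_insert w S, hwu, hdw⟩
    · obtain ⟨s, hs, hsp, hds⟩ := hparent p hp
      exact ⟨s, Set.mem_insert_of_mem w hs, hsp, hds⟩
  · rintro p (rfl | hp) v hv
    · exact hmax v (hU' hv)
    · exact hdeep p hp v (hU' hv)

lemma IsTree.exists_isDominatingSet_isTwoPacking [Finite V] (hG : G.IsTree) :
    ∃ S P : Set V, G.IsDominatingSet S ∧ G.IsTwoPacking P ∧ P.ncard = S.ncard := by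
  obtain ⟨r⟩ := hG.connected.nonempty
  exact hG.exists_isDominatingSet_isTwoPacking_of_greedy r ∅ ∅ (Set.pairwise_empty _) rfl
    (by simp) (by simp)

end SimpleGraph

section

variable {V : Type*} [Fintype V] {G : SimpleGraph V}

lemma gDomNum_le_ncard {S : Set V} (hS : G.IsDominatingSet S) : gDomNum V G ≤ S.ncard :=
  Nat.sInf_le ⟨S, hS, rfl⟩

lemma exists_isDominatingSet_ncard_eq_gDomNum :
    ∃ S : Set V, G.IsDominatingSet S ∧ S.ncard = gDomNum V G :=
  Nat.sInf_mem (s := {n | ∃ S : Set V, G.IsDominatingSet S ∧ S.ncard = n})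
    ⟨_, Set.univ, fun u => ⟨u, trivial, self_mem_closedNeighborSet u⟩, rfl⟩

lemma ncard_le_gTwoPackNum {P : Set V} (hP : G.IsTwoPacking P) :
    P.ncard ≤ gTwoPackNum V G := by
  refine le_csSup ⟨Nat.card V, ?_⟩ ⟨P, hP, rfl⟩
  rintro _ ⟨Q, -, rfl⟩
  exact Set.ncard_le_card Q

lemma gTwoPackNum_le_gDomNum : gTwoPackNum V G ≤ gDomNum V G := by
  obtain ⟨S, hS, hcard⟩ := exists_isDominatingSet_ncard_eq_gDomNum (G := G)
  refine csSup_le ⟨0, ∅, Set.pairwise_empty _, Set.ncard_empty V⟩ ?_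
  rintro n ⟨P, hP, rfl⟩
  exact hcard ▸ IsTwoPacking.ncard_le hP hS

end

/-- Meir–Moon: for every finite tree, the 2-packing number equals the domination number. -/
theorem stmt0 {V : Type*} [Fintype V] (G : SimpleGraph V) (hT : G.IsTree) :
    gTwoPackNum V G = gDomNum V G := by
  obtain ⟨S, P, hS, hP, hcard⟩ := hT.exists_isDominatingSet_isTwoPacking
  refine gTwoPackNum_le_gDomNum.antisymm ?_
  calc gDomNum V G ≤ S.ncard := gDomNum_le_ncard hS
    _ = P.ncard := hcard.symm
    _ ≤ gTwoPackNum V G := ncard_le_gTwoPackNum hP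
end

section
/- For every ditree T, the packing number equals the domination number: ρ(T) = γ(T). -/
open SimpleGraph

variable {V W : Type*}

/-- The closed out-neighborhood of `v` in the digraph with arc relation `A`. -/
def NplusC (A : V → V → Prop) (v : V) : Set V := insert v {u | A v u}

/-- The closed in-neighborhood of `v`. -/
def NminusC (A : V → V → Prop) (v : V) : Set V := insert v {u | A u v}

/-- The open out-neighborhood of `v`. -/
def NplusO (A : V → V → Prop) (v : V) : Set V := {u | A v u}

/-- The open in-neighborhood of `v`. -/
def NminusO (A : V → V → Prop) (v : V) : Set V := {u | A u v}

/-- `S` is a dominating set: every vertex is in a closed out-neighborhood of a member of `S`. -/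
def IsDomSet (A : V → V → Prop) (S : Set V) : Prop := ∀ u, ∃ v ∈ S, u ∈ NplusC A v

/-- The domination number of a digraph. -/
noncomputable def domNum (V : Type*) [Fintype V] (A : V → V → Prop) : ℕ :=
  sInf {n | ∃ S : Set V, IsDomSet A S ∧ S.ncard = n}

/-- `P` is a packing: closed in-neighborhoods of members are pairwise disjoint. -/
def IsPacking (A : V → V → Prop) (P : Set V) : Prop :=
  P.Pairwise fun x y => Disjoint (NminusC A x) (NminusC A y)

/-- The packing number of a digraph. -/
noncomputable def packNum (V : Type*) [Fintype V] (A : V → V → Prop) : ℕ :=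
  sSup {n | ∃ P : Set V, IsPacking A P ∧ P.ncard = n}

/-- `S` is a total dominating set: every vertex has an in-neighbor in `S`. -/
def IsTotalDomSet (A : V → V → Prop) (S : Set V) : Prop := ∀ u, ∃ v ∈ S, A v u

/-- The total domination number of a digraph. -/
noncomputable def totalDomNum (V : Type*) [Fintype V] (A : V → V → Prop) : ℕ :=
  sInf {n | ∃ S : Set V, IsTotalDomSet A S ∧ S.ncard = n}

/-- `P` is an open packing: open in-neighborhoods of members are pairwise disjoint. -/
def IsOpenPacking (A : V → V → Prop) (P : Set V) : Prop :=
  P.Pairwise fun x y => Disjoint (NminusO A x) (NminusO A y)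

/-- The open packing number of a digraph. -/
noncomputable def openPackNum (V : Type*) [Fintype V] (A : V → V → Prop) : ℕ :=
  sSup {n | ∃ P : Set V, IsOpenPacking A P ∧ P.ncard = n}

/-- The underlying (simple) graph of a digraph. -/
def ugr (A : V → V → Prop) : SimpleGraph V := SimpleGraph.fromRel A

/-- A ditree is a digraph whose underlying graph is a tree. -/
def IsDitree (A : V → V → Prop) : Prop := (ugr A).IsTree

/-- Arc relation of the Cartesian product of two digraphs. -/
def cartArc (A : V → V → Prop) (B : W → W → Prop) : V × W → V × W → Prop :=
  fun p q => (p.1 = q.1 ∧ B p.2 q.2) ∨ (p.2 = q.2 ∧ A p.1 q.1)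

/-- Arc relation of the direct product of two digraphs. -/
def dirArc (A : V → V → Prop) (B : W → W → Prop) : V × W → V × W → Prop :=
  fun p q => A p.1 q.1 ∧ B p.2 q.2

/-- The closed in-neighborhood graph of a digraph: distinct vertices are adjacent iff
their closed in-neighborhoods intersect. -/
def Ncg (A : V → V → Prop) : SimpleGraph V :=
  SimpleGraph.fromRel (fun u v => (NminusC A u ∩ NminusC A v).Nonempty)

/-- The open in-neighborhood graph of a digraph: distinct vertices are adjacent iff
their open in-neighborhoods intersect. -/
def Nog (A : V → V → Prop) : SimpleGraph V :=
  SimpleGraph.fromRel (fun u v => (NminusO A u ∩ NminusO A v).Nonempty)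

/-!
Every closed in-neighbourhood `N⁻[x]` spans a star in the underlying forest, and for finitely
many stars in a forest some set of vertices meeting all of them is no larger than some
subfamily of pairwise disjoint stars. Induct on a finite vertex set `U` containing the stars,
removing a vertex `ℓ` with at most one neighbour `p` in `U`. If `{ℓ}` is one of the stars, it
joins the packing, `ℓ` joins the hitting set, and the stars through `ℓ` are discarded.
Otherwise every star through `ℓ` also contains `p`, so deleting `ℓ` from all stars leaves stars,
and a packing of the shrunken family is still one of the original family. Since `ρ ≤ γ` holds
in every digraph, this gives equality.
-/

namespace SimpleGraph

variable {I : Type*} {G : SimpleGraph V}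

def IsStarSet (G : SimpleGraph V) (S : Set V) : Prop :=
  ∃ c ∈ S, ∀ y ∈ S, y ≠ c → G.Adj c y

theorem IsAcyclic.exists_subsingleton_neighborSet [Finite V] [Nonempty V] (hG : G.IsAcyclic) :
    ∃ v, (G.neighborSet v).Subsingleton := by
  obtain ⟨u, v, p, hp, hmax⟩ := Walk.exists_isPath_forall_isPath_length_le_length G
  have hsupp : ∀ w, G.Adj u w → w ∈ p.support := by
    intro w huw
    by_contra hw
    have := hmax _ _ _ (hp.cons (h := huw.symm) hw)
    simp only [Walk.length_cons] at this
    omega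
  exact ⟨u, fun w hw w' hw' =>
    (hG.eq_snd_of_adj_start hp hw (hsupp w hw)).trans
      (hG.eq_snd_of_adj_start hp hw' (hsupp w' hw')).symm⟩

theorem IsAcyclic.exists_mem_subsingleton_neighborSet_inter (hG : G.IsAcyclic) {U : Finset V}
    (hU : U.Nonempty) : ∃ ℓ ∈ U, (G.neighborSet ℓ ∩ U).Subsingleton := by
  have : Nonempty (U : Set V) := hU.coe_sort
  obtain ⟨⟨ℓ, hℓ⟩, h⟩ := (hG.induce (U : Set V)).exists_subsingleton_neighborSet
  exact ⟨ℓ, hℓ, fun y hy z hz =>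
    congrArg Subtype.val (h (x := ⟨y, hy.2⟩) (y := ⟨z, hz.2⟩) hy.1 hz.1)⟩

namespace IsStarSet

variable {S U : Set V} {ℓ : V}

theorem nonempty (hS : G.IsStarSet S) : S.Nonempty :=
  let ⟨c, hc, _⟩ := hS; ⟨c, hc⟩

theorem exists_adj_mem (hS : G.IsStarSet S) (hℓ : ℓ ∈ S) (hSℓ : S ≠ {ℓ}) :
    ∃ p ∈ S, G.Adj ℓ p := by
  obtain ⟨c, hc, hadj⟩ := hS
  by_cases hcℓ : c = ℓ
  · subst hcℓ
    obtain ⟨y, hy, hyc⟩ : ∃ y ∈ S, y ≠ c := by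
      by_contra! h
      exact hSℓ (Set.eq_singleton_iff_unique_mem.mpr ⟨hc, h⟩)
    exact ⟨y, hy, hadj y hy hyc⟩
  · exact ⟨c, hc, (hadj ℓ hℓ (Ne.symm hcℓ)).symm⟩

theorem diff_singleton (hS : G.IsStarSet S) (hSU : S ⊆ U)
    (hℓ : (G.neighborSet ℓ ∩ U).Subsingleton) (hSℓ : S ≠ {ℓ}) : G.IsStarSet (S \ {ℓ}) := by
  obtain ⟨c, hc, hadj⟩ := id hS
  by_cases hcℓ : c = ℓ
  · subst hcℓ
    obtain ⟨p, hp, hcp⟩ := hS.exists_adj_mem hc hSℓ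
    exact ⟨p, ⟨hp, hcp.ne'⟩, fun y hy hyp =>
      absurd (hℓ ⟨hadj y hy.1 hy.2, hSU hy.1⟩ ⟨hcp, hSU hp⟩) hyp⟩
  · exact ⟨c, ⟨hc, hcℓ⟩, fun y hy hyc => hadj y hy.1 hyc⟩

theorem disjoint_of_disjoint_diff_singleton {S' : Set V} (hS : G.IsStarSet S)
    (hS' : G.IsStarSet S') (hSU : S ⊆ U) (hS'U : S' ⊆ U)
    (hℓ : (G.neighborSet ℓ ∩ U).Subsingleton) (hSℓ : S ≠ {ℓ}) (hS'ℓ : S' ≠ {ℓ})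
    (hdisj : Disjoint (S \ {ℓ}) (S' \ {ℓ})) : Disjoint S S' := by
  refine Set.disjoint_left.2 fun v hv hv' => ?_
  by_cases hvℓ : v = ℓ
  · subst hvℓ
    obtain ⟨p, hp, hvp⟩ := hS.exists_adj_mem hv hSℓ
    obtain ⟨q, hq, hvq⟩ := hS'.exists_adj_mem hv' hS'ℓ
    have hpq : p = q := hℓ ⟨hvp, hSU hp⟩ ⟨hvq, hS'U hq⟩
    exact Set.disjoint_left.1 hdisj ⟨hp, hvp.ne'⟩ ⟨hpq ▸ hq, hvp.ne'⟩
  · exact Set.disjoint_left.1 hdisj ⟨hv, hvℓ⟩ ⟨hv', hvℓ⟩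

end IsStarSet

theorem IsAcyclic.exists_hittingSet_card_le_card_packing (hG : G.IsAcyclic)
    (U : Finset V) (f : I → Set V) (K : Finset I) (hstar : ∀ i ∈ K, G.IsStarSet (f i))
    (hfU : ∀ i ∈ K, f i ⊆ U) :
    ∃ (T : Finset V) (J : Finset I), (∀ i ∈ K, ∃ v ∈ T, v ∈ f i) ∧ J ⊆ K ∧
      (J : Set I).PairwiseDisjoint f ∧ T.card ≤ J.card := by
  classical
  induction U using Finset.strongInduction generalizing f K with
  | H U ih =>
  obtain rfl | hU := U.eq_empty_or_nonempty
  · refine ⟨∅, ∅, fun i hi => ?_, by simp, by simp, le_rfl⟩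
    obtain ⟨v, hv⟩ := (hstar i hi).nonempty
    simpa using hfU i hi hv
  obtain ⟨ℓ, hℓU, hℓ⟩ := hG.exists_mem_subsingleton_neighborSet_inter hU
  by_cases hsingle : ∃ i₀ ∈ K, f i₀ = {ℓ}
  · obtain ⟨i₀, hi₀, hfi₀⟩ := hsingle
    obtain ⟨T, J, hT, hJK, hJ, hcard⟩ := ih (U.erase ℓ) (U.erase_ssubset hℓU) f
      (K.filter (ℓ ∉ f ·)) (fun i hi => hstar i (Finset.mem_filter.1 hi).1)
      (fun i hi v hv => Finset.mem_erase.2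
        ⟨fun h => (Finset.mem_filter.1 hi).2 (h ▸ hv), hfU i (Finset.mem_filter.1 hi).1 hv⟩)
    have hi₀J : i₀ ∉ J := fun h => (Finset.mem_filter.1 (hJK h)).2 (hfi₀ ▸ rfl)
    refine ⟨insert ℓ T, insert i₀ J, fun i hi => ?_, ?_, ?_, ?_⟩
    · by_cases hℓi : ℓ ∈ f i
      · exact ⟨ℓ, Finset.mem_insert_self _ _, hℓi⟩
      · obtain ⟨v, hv, hvi⟩ := hT i (Finset.mem_filter.2 ⟨hi, hℓi⟩)
        exact ⟨v, Finset.mem_insert_of_mem hv, hvi⟩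
    · exact Finset.insert_subset hi₀ (hJK.trans (Finset.filter_subset _ _))
    · rw [Finset.coe_insert]
      refine hJ.insert fun j hj _ => ?_
      rw [hfi₀, Set.disjoint_singleton_left]
      exact (Finset.mem_filter.1 (hJK hj)).2
    · rw [Finset.card_insert_of_notMem hi₀J]
      exact (Finset.card_insert_le _ _).trans (by omega)
  · push Not at hsingle
    obtain ⟨T, J, hT, hJK, hJ, hcard⟩ := ih (U.erase ℓ) (U.erase_ssubset hℓU) (fun i => f i \ {ℓ})
      K (fun i hi => (hstar i hi).diff_singleton (hfU i hi) hℓ (hsingle i hi))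
      (fun i hi v hv => Finset.mem_erase.2 ⟨hv.2, hfU i hi hv.1⟩)
    refine ⟨T, J, fun i hi => ?_, hJK, fun i hi j hj hij => ?_, hcard⟩
    · obtain ⟨v, hv, hvi⟩ := hT i hi
      exact ⟨v, hv, hvi.1⟩
    · exact (hstar i (hJK hi)).disjoint_of_disjoint_diff_singleton (hstar j (hJK hj))
        (hfU i (hJK hi)) (hfU j (hJK hj)) hℓ (hsingle i (hJK hi)) (hsingle j (hJK hj))
        (hJ hi hj hij)

end SimpleGraph

section Digraph

variable {A : V → V → Prop}

theorem mem_NplusC_iff_mem_NminusC {u v : V} : u ∈ NplusC A v ↔ v ∈ NminusC A u := by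
  simp only [NplusC, NminusC, Set.mem_insert_iff, Set.mem_ofPred_eq, eq_comm]

theorem isStarSet_ugr_NminusC (x : V) : (ugr A).IsStarSet (NminusC A x) :=
  ⟨x, Set.mem_insert _ _, fun _ hy hyx => ⟨Ne.symm hyx, Or.inr (hy.resolve_left hyx)⟩⟩

theorem IsDitree.isAcyclic (hA : IsDitree A) : (ugr A).IsAcyclic :=
  SimpleGraph.IsTree.isAcyclic hA

theorem IsPacking.ncard_le_of_isDomSet {P S : Set V} (hP : IsPacking A P) (hS : IsDomSet A S)
    (hSfin : S.Finite) : P.ncard ≤ S.ncard := by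
  choose dom hdomS hdom using hS
  refine Set.ncard_le_ncard_of_injOn dom (fun p _ => hdomS p) (fun p hp q hq hpq => ?_) hSfin
  by_contra hne
  exact Set.disjoint_left.1 (hP hp hq hne) (mem_NplusC_iff_mem_NminusC.1 (hdom p))
    (hpq ▸ mem_NplusC_iff_mem_NminusC.1 (hdom q))

variable [Fintype V]

theorem domNum_le_ncard {S : Set V} (hS : IsDomSet A S) : domNum V A ≤ S.ncard :=
  Nat.sInf_le ⟨S, hS, rfl⟩

theorem ncard_le_packNum {P : Set V} (hP : IsPacking A P) : P.ncard ≤ packNum V A :=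
  le_csSup ⟨Nat.card V, by rintro _ ⟨Q, -, rfl⟩; exact Set.ncard_le_card Q⟩ ⟨P, hP, rfl⟩

theorem packNum_le_domNum : packNum V A ≤ domNum V A := by
  obtain ⟨S, hS, hcard⟩ := Nat.sInf_mem (s := {n | ∃ S : Set V, IsDomSet A S ∧ S.ncard = n})
    ⟨_, Set.univ, fun u => ⟨u, trivial, Set.mem_insert u _⟩, rfl⟩
  refine csSup_le ⟨0, ∅, Set.pairwise_empty _, Set.ncard_empty V⟩ ?_
  rintro _ ⟨P, hP, rfl⟩
  exact (hP.ncard_le_of_isDomSet hS S.toFinite).trans_eq hcard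

end Digraph

theorem stmt1_general {V : Type*} [Fintype V] (A : V → V → Prop)
    (hT : IsDitree A) :
    packNum V A = domNum V A := by
  obtain ⟨S, P, hS, -, hP, hcard⟩ := hT.isAcyclic.exists_hittingSet_card_le_card_packing
    Finset.univ (NminusC A) Finset.univ (fun x _ => isStarSet_ugr_NminusC x) (by simp)
  refine packNum_le_domNum.antisymm ?_
  calc domNum V A ≤ (S : Set V).ncard :=
        domNum_le_ncard fun u =>
          let ⟨v, hv, hvu⟩ := hS u (Finset.mem_univ u)
          ⟨v, hv, mem_NplusC_iff_mem_NminusC.2 hvu⟩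
    _ = S.card := Set.ncard_coe_finset S
    _ ≤ P.card := hcard
    _ = (P : Set V).ncard := (Set.ncard_coe_finset P).symm
    _ ≤ packNum V A := ncard_le_packNum hP

theorem stmt1 {V : Type*} [Fintype V] (A : V → V → Prop)
    (hirr : ∀ v, ¬ A v v) (hT : IsDitree A) :
    packNum V A = domNum V A :=
  stmt1_general A hT
end

section
/- If T is a ditree in which every vertex has in-degree at least 1, then the open packing number equals the total domination number: ρ°(T) = γ_t(T). -/
open SimpleGraph

variable {V W : Type*}

/-!
An open packing `P` and a total dominating set `S` satisfy `|P| ≤ |S|`: sending each vertex of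
`P` to an in-neighbour in `S` is injective, because open packings have disjoint in-neighbourhoods.

For the converse on a diforest we build `S` and `P` with `|S| ≤ |P|` greedily, keeping a set `L`
of candidate dominators and a set `R` of vertices still to be dominated, under the invariant that
every vertex outside `L` has at most one out-neighbour in `R`. If some `v ∈ R` has a unique
in-neighbour `u` in `L`, put `u` into `S` and `v` into `P`, and delete `u` from `L` and its
out-neighbours from `R`. Otherwise every `v ∈ R` has two in-neighbours in `L`, and a leaf argument
in the underlying forest (an arc from `L` to `R` farthest from a root) gives some `w ∈ L` with at
most one out-neighbour in `R`, which is deleted from `L`.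
-/

open Set

namespace SimpleGraph.IsAcyclic

variable {G : SimpleGraph V} {r u u' v : V}

lemma exists_isPath_concat (hG : G.IsAcyclic) (hr : G.Reachable r v) (huv : G.Adj u v)
    (hle : G.dist r u ≤ G.dist r v) : ∃ p : G.Walk r u, (p.concat huv).IsPath := by
  obtain ⟨q, hq, hq_len⟩ := hr.exists_path_of_dist
  obtain ⟨p, hp, hp_len⟩ := (hr.trans huv.symm.reachable).exists_path_of_dist
  refine ⟨p, hp.concat (fun hv => ?_) huv⟩
  have hlen := congrArg Walk.length (hG.path_concat hq hp huv.symm hv)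
  rw [Walk.length_concat] at hlen
  omega

lemma eq_of_adj_of_dist_le (hG : G.IsAcyclic) (hr : G.Reachable r v) (hu : G.Adj u v)
    (hu' : G.Adj u' v) (hle : G.dist r u ≤ G.dist r v) (hle' : G.dist r u' ≤ G.dist r v) :
    u = u' := by
  obtain ⟨p, hp⟩ := hG.exists_isPath_concat hr hu hle
  obtain ⟨p', hp'⟩ := hG.exists_isPath_concat hr hu' hle'
  have hpp' := congrArg Subtype.val ((hG.subsingleton_path r v).elim ⟨_, hp⟩ ⟨_, hp'⟩)
  exact (Walk.concat_inj hpp').1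

end SimpleGraph.IsAcyclic

section OpenPacking

variable {A : V → V → Prop} {L R S P : Set V} {u v w : V}

def TotallyDominates (A : V → V → Prop) (S R : Set V) : Prop := ∀ v ∈ R, ∃ u ∈ S, A u v

lemma ugr_adj_of_arc (hirr : ∀ v, ¬ A v v) (h : A u v) : (ugr A).Adj u v :=
  (fromRel_adj A u v).2 ⟨fun he => hirr v (he ▸ h), Or.inl h⟩

lemma IsOpenPacking.ncard_le [Finite V] (hP : IsOpenPacking A P) (hS : IsTotalDomSet A S) :
    P.ncard ≤ S.ncard := by
  choose f hfS hf using hS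
  refine ncard_le_ncard_of_injOn f (fun x _ => hfS x) (fun x hx y hy hxy => ?_) S.toFinite
  by_contra hne
  exact disjoint_left.1 (hP hx hy hne) (hf x) (show A (f x) y from hxy ▸ hf y)

lemma IsOpenPacking.insert_of_disjoint (hP : IsOpenPacking A P)
    (h : ∀ y ∈ P, v ≠ y → Disjoint (NminusO A v) (NminusO A y)) :
    IsOpenPacking A (insert v P) :=
  pairwise_insert.2 ⟨hP, fun y hy hne => ⟨h y hy hne, (h y hy hne).symm⟩⟩

lemma IsOpenPacking.insert_of_subsingleton_inNeighbors (hP : IsOpenPacking A P)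
    (hPR : P ⊆ R \ NplusO A u) (hv : v ∈ R) (hu : u ∈ L) (huv : A u v)
    (hv_in : (L ∩ NminusO A v).Subsingleton) (hout : ∀ z ∉ L, (R ∩ NplusO A z).Subsingleton) :
    IsOpenPacking A (insert v P) := by
  refine hP.insert_of_disjoint fun y hy hne =>
    disjoint_left.2 fun z (hzv : A z v) (hzy : A z y) => ?_
  by_cases hz : z ∈ L
  · have hzu : z = u := hv_in ⟨hz, hzv⟩ ⟨hu, huv⟩
    exact (hPR hy).2 (hzu ▸ hzy)
  · exact hne (hout z hz ⟨hv, hzv⟩ ⟨(hPR hy).1, hzy⟩)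

lemma TotallyDominates.diff_outNeighbors (h : TotallyDominates A L R) :
    TotallyDominates A (L \ {u}) (R \ NplusO A u) := fun v ⟨hv, huv⟩ => by
  obtain ⟨x, hx, hxv⟩ := h v hv
  exact ⟨x, ⟨hx, fun (hxu : x = u) => huv (hxu ▸ hxv)⟩, hxv⟩

lemma TotallyDominates.insert_of_diff (h : TotallyDominates A S (R \ NplusO A u)) :
    TotallyDominates A (insert u S) R := fun v hv => by
  by_cases huv : A u v
  · exact ⟨u, mem_insert u S, huv⟩
  · obtain ⟨x, hx, hxv⟩ := h v ⟨hv, huv⟩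
    exact ⟨x, mem_insert_of_mem u hx, hxv⟩

lemma totallyDominates_diff_singleton (hin : ∀ v ∈ R, (L ∩ NminusO A v).Nontrivial) :
    TotallyDominates A (L \ {w}) R :=
  fun v hv => by
    obtain ⟨x, ⟨hx, hxv⟩, hxw⟩ := (hin v hv).exists_ne w
    exact ⟨x, ⟨hx, hxw⟩, hxv⟩

lemma subsingleton_outNeighbors_diff_singleton {R' : Set V}
    (hout : ∀ z ∉ L, (R ∩ NplusO A z).Subsingleton) (hR' : R' ⊆ R)
    (hw : (R' ∩ NplusO A w).Subsingleton) : ∀ z ∉ L \ {w}, (R' ∩ NplusO A z).Subsingleton := by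
  intro z hz
  by_cases hzw : z = w
  · exact hzw ▸ hw
  · exact (hout z fun hzL => hz ⟨hzL, hzw⟩).anti (inter_subset_inter_left _ hR')

lemma exists_mem_subsingleton_outNeighbors [Finite V] (hirr : ∀ v, ¬ A v v)
    (hT : (ugr A).IsAcyclic) (hR : R.Nonempty) (hin : ∀ v ∈ R, (L ∩ NminusO A v).Nontrivial) :
    ∃ w ∈ L, (R ∩ NplusO A w).Subsingleton := by
  by_contra! hout
  obtain ⟨r, hr⟩ := hR
  set d : V → ℕ := (ugr A).dist r
  let F : Set (V × V) := {e | e.1 ∈ L ∧ e.2 ∈ R ∧ A e.1 e.2 ∧ (ugr A).Reachable r e.2}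
  have hF : F.Nonempty := by
    obtain ⟨u, ⟨hu, hur⟩, -⟩ := (hin r hr).exists_ne r
    exact ⟨(u, r), hu, hr, hur, .refl r⟩
  obtain ⟨⟨u, v⟩, ⟨hu, hv, huv, hrv⟩, hmax⟩ :=
    F.exists_max_image (fun e => d e.1 + d e.2) F.toFinite hF
  have hadj := ugr_adj_of_arc hirr huv
  -- Whichever of `u`, `v` is the child of the other has a second arc in `F`, farther from `r`.
  by_cases hle : d u ≤ d v
  · obtain ⟨u', ⟨hu', hu'v⟩, hne⟩ := (hin v hv).exists_ne u
    have hlt : d v < d u' := not_le.1 fun hle' =>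
      hne (hT.eq_of_adj_of_dist_le hrv (ugr_adj_of_arc hirr hu'v) hadj hle' hle)
    have := hmax (u', v) ⟨hu', hv, hu'v, hrv⟩
    dsimp only at this
    omega
  · obtain ⟨v', ⟨hv', huv'⟩, hne⟩ := (hout u hu).exists_ne v
    have hru := hrv.trans hadj.symm.reachable
    have hadj' := ugr_adj_of_arc hirr huv'
    have hlt : d u < d v' := not_le.1 fun hle' =>
      hne (hT.eq_of_adj_of_dist_le hru hadj'.symm hadj.symm hle' (le_of_not_ge hle))
    have := hmax (u, v') ⟨hu, hv', huv', hru.trans hadj'.reachable⟩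
    dsimp only at this
    omega

theorem exists_totallyDominates_isOpenPacking_ncard_le [Finite V] (hirr : ∀ v, ¬ A v v)
    (hT : (ugr A).IsAcyclic) (L R : Set V) (hdom : TotallyDominates A L R)
    (hout : ∀ z ∉ L, (R ∩ NplusO A z).Subsingleton) :
    ∃ S ⊆ L, ∃ P ⊆ R, TotallyDominates A S R ∧ IsOpenPacking A P ∧ S.ncard ≤ P.ncard := by
  rcases R.eq_empty_or_nonempty with rfl | hR
  · exact ⟨∅, empty_subset L, ∅, empty_subset ∅, fun _ h => h.elim, pairwise_empty _, le_rfl⟩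
  by_cases hcase : ∃ v ∈ R, (L ∩ NminusO A v).Subsingleton
  · obtain ⟨v, hv, hv_in⟩ := hcase
    obtain ⟨u, hu, huv⟩ := hdom v hv
    have := ncard_sdiff_singleton_lt_of_mem hu L.toFinite
    obtain ⟨S, hSL, P, hPR, hS, hP, hle⟩ :=
      exists_totallyDominates_isOpenPacking_ncard_le hirr hT (L \ {u}) (R \ NplusO A u)
        hdom.diff_outNeighbors (subsingleton_outNeighbors_diff_singleton hout sdiff_subset
          (by simp only [sdiff_inter_self, subsingleton_empty]))
    have hvP : v ∉ P := fun h => (hPR h).2 huv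
    refine ⟨insert u S, insert_subset hu (hSL.trans sdiff_subset), insert v P,
      insert_subset hv (hPR.trans sdiff_subset), hS.insert_of_diff,
      hP.insert_of_subsingleton_inNeighbors hPR hv hu huv hv_in hout, ?_⟩
    rw [ncard_insert_of_notMem hvP P.toFinite]
    exact (ncard_insert_le u S).trans (Nat.succ_le_succ hle)
  · push Not at hcase
    obtain ⟨w, hw, hw_out⟩ := exists_mem_subsingleton_outNeighbors hirr hT hR hcase
    have := ncard_sdiff_singleton_lt_of_mem hw L.toFinite
    obtain ⟨S, hSL, P, hPR, hS, hP, hle⟩ :=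
      exists_totallyDominates_isOpenPacking_ncard_le hirr hT (L \ {w}) R
        (totallyDominates_diff_singleton hcase)
        (subsingleton_outNeighbors_diff_singleton hout subset_rfl hw_out)
    exact ⟨S, hSL.trans sdiff_subset, P, hPR, hS, hP, hle⟩
termination_by L.ncard

lemma totalDomNum_le_ncard [Fintype V] (hS : IsTotalDomSet A S) : totalDomNum V A ≤ S.ncard :=
  Nat.sInf_le ⟨S, hS, rfl⟩

lemma ncard_le_openPackNum [Fintype V] (hP : IsOpenPacking A P) : P.ncard ≤ openPackNum V A :=
  le_csSup ⟨Nat.card V, fun _ ⟨Q, _, hQ⟩ => hQ ▸ Q.ncard_le_card⟩ ⟨P, hP, rfl⟩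

lemma openPackNum_le_totalDomNum [Fintype V] (hdeg : ∀ v, ∃ u, A u v) :
    openPackNum V A ≤ totalDomNum V A := by
  have hS : IsTotalDomSet A univ := fun v => (hdeg v).imp fun u hu => ⟨mem_univ u, hu⟩
  obtain ⟨S, hS, hS_card⟩ : totalDomNum V A ∈ {n | ∃ S : Set V, IsTotalDomSet A S ∧ S.ncard = n} :=
    Nat.sInf_mem ⟨_, univ, hS, rfl⟩
  exact csSup_le' fun _ ⟨P, hP, hP_card⟩ => hP_card ▸ hS_card ▸ hP.ncard_le hS

lemma totalDomNum_le_openPackNum [Fintype V] (hirr : ∀ v, ¬ A v v) (hT : (ugr A).IsAcyclic)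
    (hdeg : ∀ v, ∃ u, A u v) : totalDomNum V A ≤ openPackNum V A := by
  obtain ⟨S, -, P, -, hS, hP, hle⟩ := exists_totallyDominates_isOpenPacking_ncard_le hirr hT
    univ univ (fun v _ => (hdeg v).imp fun u hu => ⟨mem_univ u, hu⟩)
    (fun z hz => (hz (mem_univ z)).elim)
  calc totalDomNum V A ≤ S.ncard := totalDomNum_le_ncard fun v => hS v (mem_univ v)
    _ ≤ P.ncard := hle
    _ ≤ openPackNum V A := ncard_le_openPackNum hP

end OpenPacking

theorem stmt2 {V : Type*} [Fintype V] (A : V → V → Prop)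
    (hirr : ∀ v, ¬ A v v) (hT : IsDitree A)
    (hdeg : ∀ v : V, ∃ u, A u v) :
    openPackNum V A = totalDomNum V A :=
  (openPackNum_le_totalDomNum hdeg).antisymm (totalDomNum_le_openPackNum hirr hT.isAcyclic hdeg)
end

section
/- If G is a digraph with minimum in-degree at least 1 such that ρ°(G) = γ_t(G), then for every digraph H with minimum in-degree at least 1, the total domination number of the direct product satisfies γ_t(G × H) = γ_t(G) · γ_t(H). -/
open SimpleGraph

variable {V W : Type*}

/-! Every total dominating set `D` of `G × H` and every open packing `P` of `G` satisfy
`|P| · γₜ(H) ≤ |D|`: for each `v ∈ P` the elements of `D` whose first coordinate is an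
in-neighbour of `v` project onto a total dominating set of `H`, and since the open
in-neighbourhoods of the vertices of `P` are disjoint, these fibres of `D` are disjoint.
Together with `ρ°(G) = γₜ(G)` this bounds `γₜ(G × H)` from below, while the product of
minimum total dominating sets of `G` and `H` bounds it from above. -/

section

variable {A : V → V → Prop} {B : W → W → Prop}

theorem totalDomNum_le_card [Fintype V] {S : Finset V} (hS : IsTotalDomSet A ↑S) :
    totalDomNum V A ≤ S.card := by
  rw [← Set.ncard_coe_finset]
  exact Nat.sInf_le ⟨_, hS, rfl⟩

theorem exists_isTotalDomSet_card_eq_totalDomNum [Fintype V] (hd : ∀ v : V, ∃ u, A u v) :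
    ∃ S : Finset V, IsTotalDomSet A ↑S ∧ S.card = totalDomNum V A := by
  classical
  have hne : {n | ∃ S : Set V, IsTotalDomSet A S ∧ S.ncard = n}.Nonempty :=
    ⟨_, Set.univ, fun v => (hd v).imp fun u hu => ⟨trivial, hu⟩, rfl⟩
  obtain ⟨S, hS, hcard⟩ := Nat.sInf_mem hne
  exact ⟨S.toFinset, by simpa using hS, by rw [← Set.ncard_eq_toFinset_card', hcard]; rfl⟩

theorem exists_isOpenPacking_card_eq_openPackNum [Fintype V] :
    ∃ P : Finset V, IsOpenPacking A ↑P ∧ P.card = openPackNum V A := by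
  classical
  have hne : {n | ∃ P : Set V, IsOpenPacking A P ∧ P.ncard = n}.Nonempty :=
    ⟨0, ∅, Set.pairwise_empty _, Set.ncard_empty V⟩
  have hbdd : BddAbove {n | ∃ P : Set V, IsOpenPacking A P ∧ P.ncard = n} :=
    ⟨Nat.card V, by rintro _ ⟨P, -, rfl⟩; exact Set.ncard_le_card P⟩
  obtain ⟨P, hP, hcard⟩ := Nat.sSup_mem hne hbdd
  exact ⟨P.toFinset, by simpa using hP, by rw [← Set.ncard_eq_toFinset_card', hcard]; rfl⟩

theorem IsTotalDomSet.prod {S : Set V} {T : Set W} (hS : IsTotalDomSet A S)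
    (hT : IsTotalDomSet B T) : IsTotalDomSet (dirArc A B) (S ×ˢ T) := by
  rintro ⟨v, w⟩
  obtain ⟨s, hs, hsv⟩ := hS v
  obtain ⟨t, ht, htw⟩ := hT w
  exact ⟨(s, t), ⟨hs, ht⟩, hsv, htw⟩

theorem exists_dirArc_to (hdA : ∀ v : V, ∃ u, A u v) (hdB : ∀ w : W, ∃ u, B u w)
    (p : V × W) : ∃ q, dirArc A B q p := by
  obtain ⟨u, hu⟩ := hdA p.1
  obtain ⟨x, hx⟩ := hdB p.2
  exact ⟨(u, x), hu, hx⟩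

theorem totalDomNum_dirArc_le [Fintype V] [Fintype W] (hdA : ∀ v : V, ∃ u, A u v)
    (hdB : ∀ w : W, ∃ u, B u w) :
    totalDomNum (V × W) (dirArc A B) ≤ totalDomNum V A * totalDomNum W B := by
  obtain ⟨S, hS, hScard⟩ := exists_isTotalDomSet_card_eq_totalDomNum hdA
  obtain ⟨T, hT, hTcard⟩ := exists_isTotalDomSet_card_eq_totalDomNum hdB
  rw [← hScard, ← hTcard, ← Finset.card_product]
  exact totalDomNum_le_card (by simpa using hS.prod hT)

theorem IsOpenPacking.card_filter_le_one {P : Finset V} (hP : IsOpenPacking A ↑P) (u : V)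
    [DecidablePred (A u ·)] : (P.filter (A u ·)).card ≤ 1 := by
  refine Finset.card_le_one.2 fun v hv v' hv' => by_contra fun hne => ?_
  rw [Finset.mem_filter] at hv hv'
  exact Set.disjoint_left.1 (hP hv.1 hv'.1 hne) hv.2 hv'.2

theorem totalDomNum_le_card_filter_dirArc [Fintype W] {D : Finset (V × W)}
    (hD : IsTotalDomSet (dirArc A B) ↑D) (v : V) [DecidablePred fun p : V × W => A p.1 v] :
    totalDomNum W B ≤ (D.filter fun p => A p.1 v).card := by
  classical
  refine (totalDomNum_le_card (S := (D.filter fun p => A p.1 v).image Prod.snd)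
    fun w => ?_).trans Finset.card_image_le
  obtain ⟨p, hpD, hpv, hpw⟩ := hD (v, w)
  exact ⟨p.2, by simpa using ⟨p.1, hpD, hpv⟩, hpw⟩

theorem IsOpenPacking.card_mul_totalDomNum_le [Fintype W] {P : Finset V}
    (hP : IsOpenPacking A ↑P) {D : Finset (V × W)} (hD : IsTotalDomSet (dirArc A B) ↑D) :
    P.card * totalDomNum W B ≤ D.card := by
  classical
  simpa using Finset.card_mul_le_card_mul (fun v (p : V × W) => A p.1 v)
    (fun v _ => totalDomNum_le_card_filter_dirArc hD v)
    (fun p _ => hP.card_filter_le_one p.1)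

end

theorem stmt3_general {V W : Type*} [Fintype V] [Fintype W]
    (A : V → V → Prop) (B : W → W → Prop)
    (hdA : ∀ v : V, ∃ u, A u v) (hdB : ∀ w : W, ∃ u, B u w)
    (hGP : openPackNum V A = totalDomNum V A) :
    totalDomNum (V × W) (dirArc A B) = totalDomNum V A * totalDomNum W B := by
  refine le_antisymm (totalDomNum_dirArc_le hdA hdB) ?_
  obtain ⟨P, hP, hPcard⟩ := exists_isOpenPacking_card_eq_openPackNum (A := A)
  obtain ⟨D, hD, hDcard⟩ :=
    exists_isTotalDomSet_card_eq_totalDomNum (exists_dirArc_to hdA hdB)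
  calc totalDomNum V A * totalDomNum W B = P.card * totalDomNum W B := by rw [hPcard, hGP]
    _ ≤ D.card := hP.card_mul_totalDomNum_le hD
    _ = totalDomNum (V × W) (dirArc A B) := hDcard

theorem stmt3 {V W : Type*} [Fintype V] [Fintype W]
    (A : V → V → Prop) (B : W → W → Prop)
    (hirrA : ∀ v, ¬ A v v) (hirrB : ∀ w, ¬ B w w)
    (hdA : ∀ v : V, ∃ u, A u v) (hdB : ∀ w : W, ∃ u, B u w)
    (hGP : openPackNum V A = totalDomNum V A) :
    totalDomNum (V × W) (dirArc A B) = totalDomNum V A * totalDomNum W B :=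
  stmt3_general A B hdA hdB hGP
end

section
/- For all digraphs G and H, γ(G □ H) ≥ max{γ(G)·ρ(H), γ(H)·ρ(G)}. -/
open SimpleGraph

variable {V W : Type*}

lemma domNum_le' {V : Type*} [Fintype V] {A : V → V → Prop} {S : Set V}
    (hS : IsDomSet A S) : domNum V A ≤ S.ncard :=
  Nat.sInf_le ⟨S, hS, rfl⟩

lemma exists_domSet (V : Type*) [Fintype V] (A : V → V → Prop) :
    ∃ S : Set V, IsDomSet A S ∧ S.ncard = domNum V A := by
  have h : domNum V A ∈ {n | ∃ S : Set V, IsDomSet A S ∧ S.ncard = n} :=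
    Nat.sInf_mem ⟨_, Set.univ, fun u => ⟨u, trivial, Set.mem_insert _ _⟩, rfl⟩
  obtain ⟨S, h1, h2⟩ := h
  exact ⟨S, h1, h2⟩

lemma exists_packing (V : Type*) [Fintype V] (A : V → V → Prop) :
    ∃ P : Set V, IsPacking A P ∧ P.ncard = packNum V A := by
  have hbdd : BddAbove {n | ∃ P : Set V, IsPacking A P ∧ P.ncard = n} := by
    refine ⟨Fintype.card V, ?_⟩
    rintro n ⟨P, -, rfl⟩
    calc P.ncard ≤ (Set.univ : Set V).ncard :=
          Set.ncard_le_ncard (Set.subset_univ _) Set.finite_univ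
      _ = Fintype.card V := by rw [Set.ncard_univ, Nat.card_eq_fintype_card]
  have hne : {n | ∃ P : Set V, IsPacking A P ∧ P.ncard = n}.Nonempty :=
    ⟨0, ∅, Set.pairwise_empty _, Set.ncard_empty _⟩
  have h := Nat.sSup_mem hne hbdd
  obtain ⟨P, h1, h2⟩ := h
  exact ⟨P, h1, h2⟩

lemma key_lemma {V W U : Type*} [Fintype V] [Fintype W] [Fintype U]
    (A : V → V → Prop) (B : W → W → Prop) (C : U → U → Prop) (e : U ≃ V × W)
    (hC : ∀ p q, C p q ↔ cartArc A B (e p) (e q)) :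
    domNum V A * packNum W B ≤ domNum U C := by
  classical
  obtain ⟨D, hD, hDcard⟩ := exists_domSet U C
  obtain ⟨P, hP, hPcard⟩ := exists_packing W B
  set T : W → Set U := fun h => D ∩ {u | (e u).2 ∈ NminusC B h} with hTdef
  have hTsub : ∀ h, T h ⊆ D := fun h => Set.inter_subset_left
  -- each T h projects to a dominating set of A
  have hdom : ∀ h : W, IsDomSet A ((fun u => (e u).1) '' T h) := by
    intro h g
    obtain ⟨u, huD, hu⟩ := hD (e.symm (g, h))
    rcases hu with hu | hu
    · -- e.symm (g,h) = u
      have heu : e u = (g, h) := by rw [← hu, Equiv.apply_symm_apply]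
      refine ⟨g, ⟨u, ⟨huD, ?_⟩, ?_⟩, Set.mem_insert _ _⟩
      · show (e u).2 ∈ NminusC B h
        rw [heu]; exact Set.mem_insert _ _
      · show (e u).1 = g
        rw [heu]
    · -- C u (e.symm (g,h))
      have hc : cartArc A B (e u) (g, h) := by
        have := (hC u (e.symm (g, h))).mp hu
        rwa [Equiv.apply_symm_apply] at this
      rcases hc with ⟨h1, h2⟩ | ⟨h1, h2⟩
      · refine ⟨g, ⟨u, ⟨huD, ?_⟩, h1⟩, Set.mem_insert _ _⟩
        exact Set.mem_insert_of_mem _ h2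
      · refine ⟨(e u).1, ⟨u, ⟨huD, ?_⟩, rfl⟩, Set.mem_insert_of_mem _ h2⟩
        show (e u).2 ∈ NminusC B h
        rw [h1]; exact Set.mem_insert _ _
  have hcard : ∀ h : W, domNum V A ≤ (T h).ncard := fun h =>
    le_trans (domNum_le' (hdom h)) (Set.ncard_image_le (T h).toFinite)
  -- disjointness
  have hdisj : ∀ h₁ ∈ P, ∀ h₂ ∈ P, h₁ ≠ h₂ → Disjoint (T h₁) (T h₂) := by
    intro h₁ hh₁ h₂ hh₂ hne
    have hd := hP hh₁ hh₂ hne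
    rw [Set.disjoint_left]
    rintro u ⟨-, hu1⟩ ⟨-, hu2⟩
    exact (Set.disjoint_left.mp hd) hu1 hu2
  -- move to finsets
  let Q : Finset W := P.toFinset
  let t : W → Finset U := fun h => (T h).toFinset
  have hQcard : Q.card = P.ncard := (Set.ncard_eq_toFinset_card' P).symm
  have htdisj : ∀ h₁ ∈ Q, ∀ h₂ ∈ Q, h₁ ≠ h₂ → Disjoint (t h₁) (t h₂) := by
    intro h₁ hh₁ h₂ hh₂ hne
    rw [Finset.disjoint_left]
    intro u hu1 hu2
    exact (Set.disjoint_left.mp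
      (hdisj h₁ (Set.mem_toFinset.mp hh₁) h₂ (Set.mem_toFinset.mp hh₂) hne))
      (Set.mem_toFinset.mp hu1) (Set.mem_toFinset.mp hu2)
  have hsum : ∑ h ∈ Q, (t h).card = (Q.biUnion t).card :=
    (Finset.card_biUnion htdisj).symm
  have hsub : Q.biUnion t ⊆ D.toFinset := by
    intro u hu
    obtain ⟨h, -, hu⟩ := Finset.mem_biUnion.mp hu
    exact Set.mem_toFinset.mpr (hTsub h (Set.mem_toFinset.mp hu))
  calc domNum V A * packNum W B = packNum W B * domNum V A := mul_comm _ _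
    _ = Q.card * domNum V A := by rw [hQcard, hPcard]
    _ = ∑ _h ∈ Q, domNum V A := by rw [Finset.sum_const, smul_eq_mul]
    _ ≤ ∑ h ∈ Q, (t h).card := by
        refine Finset.sum_le_sum fun h _ => ?_
        calc domNum V A ≤ (T h).ncard := hcard h
          _ = (t h).card := Set.ncard_eq_toFinset_card' _
    _ = (Q.biUnion t).card := hsum
    _ ≤ D.toFinset.card := Finset.card_le_card hsub
    _ = D.ncard := (Set.ncard_eq_toFinset_card' _).symm
    _ = domNum U C := hDcard

theorem stmt5 {V W : Type*} [Fintype V] [Fintype W]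
    (A : V → V → Prop) (B : W → W → Prop)
    (hirrA : ∀ v, ¬ A v v) (hirrB : ∀ w, ¬ B w w) :
    domNum (V × W) (cartArc A B) ≥
      max (domNum V A * packNum W B) (domNum W B * packNum V A) := by
  apply max_le
  · exact key_lemma A B (cartArc A B) (Equiv.refl _) (fun p q => Iff.rfl)
  · exact key_lemma B A (cartArc A B) (Equiv.prodComm V W)
      (fun p q => by simp [cartArc, Equiv.prodComm, or_comm])
end

section
/- For every ditree T, the closed in-neighborhood graph N_c⁻(T) is a chordal graph (it contains no induced cycle of length at least 4). -/
open SimpleGraph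

variable {V W : Type*}

/-!
Root the tree at `r` and let `v` be a vertex of the cycle farthest from `r`. Closed
in-neighbourhoods are stars in the tree, so every neighbour `x` of `v` in `Ncg A` that is not
farther from `r` than `v` contains the parent of `v` in its closed in-neighbourhood. Hence any two
such neighbours are adjacent in `Ncg A`, i.e. `v` is simplicial among the vertices not farther
from `r`, whereas no vertex of a cycle of length at least `4` is simplicial.
-/

namespace SimpleGraph

variable {G : SimpleGraph V}

lemma IsTree.mem_support_of_adj_of_dist_add_one (hG : G.IsTree) {r p v : V} {q : G.Walk r v}
    (hq : q.IsPath) (hpv : G.Adj p v)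
    (hd : G.dist r p + 1 = G.dist r v) : p ∈ q.support := by
  classical
  obtain ⟨P, hP, hPlen⟩ := hG.connected.exists_path_of_dist r p
  refine hG.isAcyclic.mem_support_of_ne_mem_support_of_adj_of_isPath hq hP hpv.symm fun hv => ?_
  have : G.dist r v ≤ P.length :=
    (dist_le (P.takeUntil v hv)).trans (P.length_takeUntil_le_length hv)
  omega

lemma IsTree.eq_of_adj_of_dist_add_one (hG : G.IsTree) (r : V) {v p p' : V}
    (hp : G.Adj p v) (hp' : G.Adj p' v)
    (hd : G.dist r p + 1 = G.dist r v) (hd' : G.dist r p' + 1 = G.dist r v) : p = p' := by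
  obtain ⟨q, hq, -⟩ := hG.connected.exists_path_of_dist r v
  rw [hG.isAcyclic.eq_penultimate_of_adj_end hq hp.symm
      (hG.mem_support_of_adj_of_dist_add_one hq hp hd),
    hG.isAcyclic.eq_penultimate_of_adj_end hq hp'.symm
      (hG.mem_support_of_adj_of_dist_add_one hq hp' hd')]

open scoped Fin.CommRing in
lemma cycleGraph_exists_nonadjacent_neighbors {n : ℕ} (hn : 4 ≤ n) (i : Fin n) :
    ∃ j k, (cycleGraph n).Adj i j ∧ (cycleGraph n).Adj i k ∧ j ≠ k ∧ ¬(cycleGraph n).Adj j k := by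
  obtain ⟨m, rfl⟩ : ∃ m, n = m + 2 + 2 := ⟨n - 4, by omega⟩
  have h20 : (2 : Fin (m + 2 + 2)) ≠ 0 := by
    simp [Fin.ext_iff, Nat.mod_eq_of_lt (by omega : 2 < m + 2 + 2)]
  have h30 : (3 : Fin (m + 2 + 2)) ≠ 0 := by
    simp [Fin.ext_iff, Nat.mod_eq_of_lt (by omega : 3 < m + 2 + 2)]
  have h21 : (2 : Fin (m + 2 + 2)) ≠ 1 := by
    simp [Fin.ext_iff, Nat.mod_eq_of_lt (by omega : 2 < m + 2 + 2)]
  refine ⟨i - 1, i + 1, ?_, ?_, fun h => h20 (by linear_combination -h), ?_⟩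
  · rw [cycleGraph_adj]; left; ring
  · rw [cycleGraph_adj]; right; ring
  · rw [cycleGraph_adj]
    rintro (h | h)
    · exact h30 (by linear_combination -h)
    · exact h21 (by linear_combination h)

end SimpleGraph

variable {A : V → V → Prop} {x y v : V}

lemma ugr_adj_of_arc_s10 (hne : x ≠ y) (h : A x y) : (ugr A).Adj x y :=
  (fromRel_adj _ _ _).2 ⟨hne, .inl h⟩

lemma ncg_adj_iff : (Ncg A).Adj x y ↔ x ≠ y ∧ (NminusC A x ∩ NminusC A y).Nonempty := by
  rw [Ncg, fromRel_adj, Set.inter_comm (NminusC A y), or_self]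

lemma exists_mem_nminusC_ugr_adj_of_ncg_adj (h : (Ncg A).Adj x v) :
    ∃ y ∈ NminusC A x, (ugr A).Adj y v ∧ (y = x ∨ (ugr A).Adj y x) := by
  obtain ⟨hxv, a, hax, hav⟩ := ncg_adj_iff.1 h
  rcases eq_or_ne a v with rfl | hav'
  · have hax' : A a x := (Set.mem_insert_iff.1 hax).resolve_left hxv.symm
    exact ⟨x, Set.mem_insert x _, (ugr_adj_of_arc_s10 hxv.symm hax').symm, .inl rfl⟩
  refine ⟨a, hax, ugr_adj_of_arc_s10 hav' ((Set.mem_insert_iff.1 hav).resolve_left hav'), ?_⟩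
  rcases eq_or_ne a x with rfl | hax'
  · exact .inl rfl
  · exact .inr (ugr_adj_of_arc_s10 hax' ((Set.mem_insert_iff.1 hax).resolve_left hax'))

namespace IsDitree

lemma exists_parent_mem_nminusC (hT : IsDitree A) (r : V) (h : (Ncg A).Adj x v)
    (hxv : (ugr A).dist r x ≤ (ugr A).dist r v) :
    ∃ p ∈ NminusC A x, (ugr A).Adj p v ∧ (ugr A).dist r p + 1 = (ugr A).dist r v := by
  obtain ⟨y, hy, hyv, hyx⟩ := exists_mem_nminusC_ugr_adj_of_ncg_adj h
  rcases IsTree.dist_eq_dist_add_one_of_adj hT r hyv with hdy | hdv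
  · -- here `y` is a child of `v`, and `x ≠ v` would be a second parent of `y`
    refine absurd ?_ (ncg_adj_iff.1 h).1
    rcases hyx with rfl | hyx
    · omega
    rcases IsTree.dist_eq_dist_add_one_of_adj hT r hyx with hdy' | hdx
    · exact IsTree.eq_of_adj_of_dist_add_one hT r hyx.symm hyv.symm (by omega) (by omega)
    · omega
  · exact ⟨y, hy, hyv, hdv.symm⟩

lemma ncg_adj_of_dist_le (hT : IsDitree A) (r : V) (hx : (Ncg A).Adj x v)
    (hy : (Ncg A).Adj y v) (hxv : (ugr A).dist r x ≤ (ugr A).dist r v)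
    (hyv : (ugr A).dist r y ≤ (ugr A).dist r v) (hxy : x ≠ y) : (Ncg A).Adj x y := by
  obtain ⟨p, hpx, hpv, hdp⟩ := hT.exists_parent_mem_nminusC r hx hxv
  obtain ⟨p', hpy, hpv', hdp'⟩ := hT.exists_parent_mem_nminusC r hy hyv
  obtain rfl := IsTree.eq_of_adj_of_dist_add_one hT r hpv hpv' hdp hdp'
  exact ncg_adj_iff.2 ⟨hxy, p, hpx, hpy⟩

end IsDitree

theorem stmt10_general {V : Type*} (A : V → V → Prop)
    (hT : IsDitree A) :
    ∀ n : ℕ, 4 ≤ n → IsEmpty (SimpleGraph.cycleGraph n ↪g Ncg A) := by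
  intro n hn
  refine ⟨fun f => ?_⟩
  obtain ⟨r⟩ := IsTree.connected hT |>.nonempty
  have : Nonempty (Fin n) := ⟨⟨0, by omega⟩⟩
  obtain ⟨i, hi⟩ := Finite.exists_max fun i => (ugr A).dist r (f i)
  obtain ⟨j, k, hj, hk, hjk, hjk'⟩ := cycleGraph_exists_nonadjacent_neighbors hn i
  exact hjk' <| f.map_rel_iff.1 <| hT.ncg_adj_of_dist_le r (f.map_rel_iff.2 hj).symm
    (f.map_rel_iff.2 hk).symm (hi j) (hi k) (f.injective.ne hjk)

theorem stmt10 {V : Type*} [Fintype V] (A : V → V → Prop)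
    (hirr : ∀ v, ¬ A v v) (hT : IsDitree A) :
    ∀ n : ℕ, 4 ≤ n → IsEmpty (SimpleGraph.cycleGraph n ↪g Ncg A) :=
  stmt10_general A hT
end

section
/- Let C be the orientation C₄^{(0,2,0,2)} of the 4-cycle: the digraph with vertex set {u, p, v, q} and arc set {(u,p), (u,q), (v,p), (v,q)}. If G is a digraph whose vertex set can be partitioned into two dominating sets A and B (A ∩ B = ∅ and A ∪ B = V(G)), then γ(G □ C) ≤ |V(G)|. -/
open SimpleGraph

variable {V W : Type*}

/-- The orientation `C₄^{(0,2,0,2)}` of the 4-cycle: vertices `u = 0`, `p = 1`, `v = 2`,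
`q = 3`, arcs `(u,p), (u,q), (v,p), (v,q)`. -/
def C4Arc : Fin 4 → Fin 4 → Prop :=
  fun a b => (a = 0 ∧ b = 1) ∨ (a = 0 ∧ b = 3) ∨ (a = 2 ∧ b = 1) ∨ (a = 2 ∧ b = 3)

theorem stmt15 {V : Type*} [Fintype V] (A : V → V → Prop)
    (hirr : ∀ v, ¬ A v v)
    (S1 S2 : Set V) (hdisj : Disjoint S1 S2) (hunion : S1 ∪ S2 = Set.univ)
    (hd1 : IsDomSet A S1) (hd2 : IsDomSet A S2) :
    domNum (V × Fin 4) (cartArc A C4Arc) ≤ Fintype.card V := by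
  classical
  set S : Set (V × Fin 4) := (S1 ×ˢ {(0 : Fin 4)}) ∪ (S2 ×ˢ {(2 : Fin 4)}) with hS
  have hmem : ∀ p : V × Fin 4, p ∈ S ↔ (p.1 ∈ S1 ∧ p.2 = 0) ∨ (p.1 ∈ S2 ∧ p.2 = 2) := by
    intro p
    simp only [hS, Set.mem_union, Set.mem_prod, Set.mem_singleton_iff]
  have hdom : IsDomSet (cartArc A C4Arc) S := by
    intro ⟨g, i⟩
    have hg : g ∈ S1 ∨ g ∈ S2 := by
      have := Set.mem_univ g
      rw [← hunion] at this
      exact this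
    fin_cases i
    · obtain ⟨v, hv, hgv⟩ := hd1 g
      refine ⟨(v, 0), (hmem _).2 (Or.inl ⟨hv, rfl⟩), ?_⟩
      rcases hgv with h | h
      · exact Set.mem_insert_iff.2 (Or.inl (by simp [h]))
      · exact Set.mem_insert_iff.2 (Or.inr (Or.inr ⟨rfl, h⟩))
    · rcases hg with h | h
      · exact ⟨(g, 0), (hmem _).2 (Or.inl ⟨h, rfl⟩),
          Set.mem_insert_iff.2 (Or.inr (Or.inl ⟨rfl, Or.inl ⟨rfl, rfl⟩⟩))⟩
      · exact ⟨(g, 2), (hmem _).2 (Or.inr ⟨h, rfl⟩),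
          Set.mem_insert_iff.2 (Or.inr (Or.inl ⟨rfl, Or.inr (Or.inr (Or.inl ⟨rfl, rfl⟩))⟩))⟩
    · obtain ⟨v, hv, hgv⟩ := hd2 g
      refine ⟨(v, 2), (hmem _).2 (Or.inr ⟨hv, rfl⟩), ?_⟩
      rcases hgv with h | h
      · exact Set.mem_insert_iff.2 (Or.inl (by simp [h]))
      · exact Set.mem_insert_iff.2 (Or.inr (Or.inr ⟨rfl, h⟩))
    · rcases hg with h | h
      · exact ⟨(g, 0), (hmem _).2 (Or.inl ⟨h, rfl⟩),
          Set.mem_insert_iff.2 (Or.inr (Or.inl ⟨rfl, Or.inr (Or.inl ⟨rfl, rfl⟩)⟩))⟩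
      · exact ⟨(g, 2), (hmem _).2 (Or.inr ⟨h, rfl⟩),
          Set.mem_insert_iff.2 (Or.inr (Or.inl ⟨rfl, Or.inr (Or.inr (Or.inr ⟨rfl, rfl⟩))⟩))⟩
  have hinj : Set.InjOn Prod.fst S := by
    rintro ⟨a, x⟩ ha ⟨b, y⟩ hb (h : a = b)
    subst h
    rcases (hmem _).1 ha with ⟨h1, hx⟩ | ⟨h1, hx⟩ <;>
      rcases (hmem _).1 hb with ⟨h2, hy⟩ | ⟨h2, hy⟩
    · exact congrArg _ (hx.trans hy.symm)
    · exact absurd h2 (Set.disjoint_left.1 hdisj h1)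
    · exact absurd h1 (Set.disjoint_left.1 hdisj h2)
    · exact congrArg _ (hx.trans hy.symm)
  have himg : Prod.fst '' S = Set.univ := by
    apply Set.eq_univ_of_forall
    intro g
    have hg : g ∈ S1 ∨ g ∈ S2 := by
      have := Set.mem_univ g
      rw [← hunion] at this
      exact this
    rcases hg with h | h
    · exact ⟨(g, 0), (hmem _).2 (Or.inl ⟨h, rfl⟩), rfl⟩
    · exact ⟨(g, 2), (hmem _).2 (Or.inr ⟨h, rfl⟩), rfl⟩
  have hcard : S.ncard = Fintype.card V := by
    rw [← Set.ncard_image_of_injOn hinj, himg, Set.ncard_univ, Nat.card_eq_fintype_card]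
  exact Nat.sInf_le ⟨S, hdom, hcard⟩
end
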